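/- arXiv:2308.00900 — 2 statements merged into one kernel-verified Lean document; each statement's English description precedes it below -/
import Mathlib

section
/- For n ≥ 2, the space of immersed rectifiable paths in ℝⁿ under the path Fréchet distance is path-connected: for any continuous, rectifiable, locally injective α, β : [0,1] → ℝⁿ, there exists a family Γ : [0,1] → ([0,1] → ℝⁿ) such that each Γ_t is continuous, rectifiable, and locally injective, d_FP(Γ_0, α) = 0, d_FP(Γ_1, β) = 0, and t ↦ Γ_t is continuous with respect to d_FP. -/
open unitInterval

/-- The path Fréchet distance: infimum over orientation-preserving
homeomorphisms of `[0,1]` (i.e. those fixing `0`) of the sup of distances. -/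
noncomputable def dFP {E : Type*} [PseudoEMetricSpace E]
    (α β : unitInterval → E) : ENNReal :=
  ⨅ r : {r : unitInterval ≃ₜ unitInterval // r 0 = 0},
    ⨆ t : unitInterval, edist (α t) (β (r.1 t))

/-- The graph Fréchet distance: infimum over all homeomorphisms `h : X ≃ₜ Y`
of the sup of distances; it is `∞` if `X` and `Y` are not homeomorphic. -/
noncomputable def dFG {X Y E : Type*} [TopologicalSpace X] [TopologicalSpace Y]
    [PseudoEMetricSpace E] (φ : X → E) (ψ : Y → E) : ENNReal :=
  ⨅ h : X ≃ₜ Y, ⨆ x : X, edist (φ x) (ψ (h x))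

/-- A path is rectifiable if it has bounded variation (finite length). -/
def Rectifiable {E : Type*} [PseudoEMetricSpace E] (γ : unitInterval → E) : Prop :=
  BoundedVariationOn γ Set.univ

/-- A map is locally injective (an immersion) if every point of the domain has
a neighborhood on which the map is injective. -/
def LocallyInjective {X Y : Type*} [TopologicalSpace X] (f : X → Y) : Prop :=
  ∀ x : X, ∃ U ∈ nhds x, Set.InjOn f U

/-- A map of the circle is rectifiable if `t ↦ φ(e^{2πit})` has bounded
variation on `[0,1]`. -/
def CircleRectifiable {E : Type*} [PseudoEMetricSpace E] (φ : Circle → E) : Prop :=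
  BoundedVariationOn (fun t : ℝ => φ (Circle.exp (2 * Real.pi * t))) (Set.Icc (0:ℝ) 1)

/-!
Put `Γₜ(s) = (1 - t) α(s) + t β(s) + π t(1 - t) · exp(i c(s) / (t(1 - t)))`, the circle drawn in
a fixed plane of `ℝⁿ`, with clock `c(s) = Var(α, [0, s]) + Var(β, [0, s]) + s`. The circle term
has radius `π t(1 - t)`, so `Γ` is jointly continuous and `Γ₀ = α`, `Γ₁ = β`; being `π`-Lipschitz
in `c`, it keeps every `Γₜ` rectifiable. For `0 < t < 1` and nearby `s < s'`, the angle advances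
by at most `π`, so by Jordan's inequality the circle term moves by at least `2 (c(s') - c(s))`,
while the interpolation moves by less than `c(s') - c(s)`: hence `Γₜ` is locally injective.
Joint continuity on the compact square makes `t ↦ Γₜ` uniformly continuous, and `d_FP` is
bounded by the uniform distance.
-/

open Set Filter Topology Real

section Variation

variable {α E F : Type*} [LinearOrder α]

theorem eVariationOn_le_of_edist_le [PseudoEMetricSpace E] [PseudoEMetricSpace F]
    {f : α → E} {g : α → F} {s : Set α}
    (h : ∀ x ∈ s, ∀ y ∈ s, x ≤ y → edist (f x) (f y) ≤ edist (g x) (g y)) :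
    eVariationOn f s ≤ eVariationOn g s :=
  iSup_mono fun ⟨_, u, hu, us⟩ => Finset.sum_le_sum fun i _ => by
    simpa only [edist_comm] using h _ (us i) _ (us (i + 1)) (hu i.le_succ)

variable [PseudoMetricSpace E] {f : α → E}

theorem BoundedVariationOn.dist_le_variationOnFromTo_sub (hf : BoundedVariationOn f univ)
    (a : α) {x y : α} (hxy : x ≤ y) :
    dist (f x) (f y) ≤ variationOnFromTo f univ a y - variationOnFromTo f univ a x := by
  rw [variationOnFromTo.sub_right hf.locallyBoundedVariationOn (mem_univ _) (mem_univ _)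
    (mem_univ _), variationOnFromTo.eq_of_le _ _ hxy]
  exact (hf.mono (subset_univ (univ ∩ Icc x y))).dist_le ⟨mem_univ _, left_mem_Icc.2 hxy⟩
    ⟨mem_univ _, right_mem_Icc.2 hxy⟩

theorem BoundedVariationOn.continuous_variationOnFromTo [TopologicalSpace α] [OrderTopology α]
    (hf : BoundedVariationOn f univ) (hc : Continuous f) (a : α) :
    Continuous (variationOnFromTo f univ a) := by
  refine continuous_iff_continuousAt.2 fun x => ?_
  have hsplit : variationOnFromTo f univ a =
      fun y => variationOnFromTo f univ a x + variationOnFromTo f univ x y :=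
    funext fun y => (variationOnFromTo.add hf.locallyBoundedVariationOn (mem_univ _)
      (mem_univ _) (mem_univ _)).symm
  suffices Tendsto (variationOnFromTo f univ x) (𝓝 x) (𝓝 0) by
    rw [ContinuousAt, hsplit]
    simpa only [variationOnFromTo.self, add_zero] using this.const_add _
  have hright := hf.tendsto_eVariationOn_Icc_zero_right x hc.continuousWithinAt
  have hleft := hf.tendsto_eVariationOn_Icc_zero_left (x := x) hc.continuousWithinAt
  rw [nhdsWithin_univ] at hright hleft
  refine squeeze_zero_norm (fun y => ?_) (by
    simpa using ((ENNReal.tendsto_toReal ENNReal.zero_ne_top).comp hright).add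
      ((ENNReal.tendsto_toReal ENNReal.zero_ne_top).comp hleft))
  rcases le_total x y with hxy | hyx
  · rw [variationOnFromTo.eq_of_le _ _ hxy, univ_inter, Real.norm_eq_abs, ENNReal.abs_toReal]
    exact le_add_of_nonneg_right ENNReal.toReal_nonneg
  · rw [variationOnFromTo.eq_of_ge _ _ hyx, univ_inter, norm_neg, Real.norm_eq_abs,
      ENNReal.abs_toReal]
    exact le_add_of_nonneg_left ENNReal.toReal_nonneg

end Variation

theorem dist_circleMap_le (c : ℂ) (R a b : ℝ) :
    dist (circleMap c R a) (circleMap c R b) ≤ |R| * |a - b| := by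
  simpa [Real.dist_eq] using (lipschitzWith_circleMap c R).dist_le_mul a b

theorem mul_abs_le_dist_circleMap (c : ℂ) (R : ℝ) {a b : ℝ} (hab : |a - b| ≤ π) :
    2 / π * |R| * |a - b| ≤ dist (circleMap c R a) (circleMap c R b) := by
  have hchord : dist (circleMap c R a) (circleMap c R b) = |R| * |2 * sin ((a - b) / 2)| := by
    have : circleMap c R a - circleMap c R b =
        R * Complex.exp (b * Complex.I) * (Complex.exp (Complex.I * (a - b : ℝ)) - 1) := by
      simp only [circleMap, mul_sub, mul_one, mul_assoc _ (Complex.exp _),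
        ← Complex.exp_add]
      push_cast; ring_nf
    rw [dist_eq_norm, this, norm_mul, norm_mul, Complex.norm_exp_ofReal_mul_I,
      Complex.norm_exp_I_mul_ofReal_sub_one, Complex.norm_real, Real.norm_eq_abs,
      Real.norm_eq_abs, mul_one]
  have hsin : 2 / π * (|a - b| / 2) ≤ |sin ((a - b) / 2)| := by
    have h := mul_le_sin (x := |a - b| / 2) (by positivity) (by linarith)
    rcases abs_cases (a - b) with ⟨h', -⟩ | ⟨h', -⟩ <;> rw [h'] at h ⊢
    · exact h.trans (le_abs_self _)
    · rw [neg_div, sin_neg] at h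
      rw [neg_div]
      exact h.trans (neg_le_abs _)
  rw [hchord, abs_mul, abs_two]
  nlinarith [abs_nonneg R, pi_pos]

theorem dist_circleMap_div_le (R e a b : ℝ) :
    dist (circleMap 0 (R * e) (a / e)) (circleMap 0 (R * e) (b / e)) ≤ |R| * |a - b| := by
  rcases eq_or_ne e 0 with rfl | he
  · simp only [mul_zero, circleMap_zero_radius, Function.const_apply, dist_self]
    positivity
  · refine (dist_circleMap_le 0 _ _ _).trans_eq ?_
    rw [← sub_div, abs_mul, abs_div, mul_assoc, mul_div_cancel₀ _ (abs_ne_zero.2 he)]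

theorem continuous_circleMap_zero_of_continuousAt {X : Type*} [TopologicalSpace X]
    {R θ : X → ℝ} (hR : Continuous R) (hθ : ∀ x, R x ≠ 0 → ContinuousAt θ x) :
    Continuous fun x => circleMap 0 (R x) (θ x) := by
  refine continuous_iff_continuousAt.2 fun x => ?_
  rcases eq_or_ne (R x) 0 with h | h
  · rw [ContinuousAt, h, circleMap_zero_radius, Function.const_apply,
      tendsto_zero_iff_norm_tendsto_zero]
    simp_rw [norm_circleMap_zero]
    simpa [h] using (hR.tendsto x).abs
  · have := hθ x h
    simp only [circleMap_zero]
    fun_prop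

noncomputable def planeEmbedding {n : ℕ} (hn : 2 ≤ n) : ℂ →ₗᵢ[ℝ] EuclideanSpace ℝ (Fin n) :=
  let b := Complex.orthonormalBasisOneI.toBasis
  let e : Fin 2 → EuclideanSpace ℝ (Fin n) := fun i => EuclideanSpace.single (Fin.castLE hn i) 1
  (b.constr ℝ e).isometryOfOrthonormal (v := b)
    (by simp [b])
    (by
      rw [show b.constr ℝ e ∘ b = e from funext fun i => b.constr_basis ℝ e i]
      exact EuclideanSpace.orthonormal_single.comp _ (Fin.castLE_injective hn))

theorem dFP_le_iSup_edist {E : Type*} [PseudoEMetricSpace E] (f g : I → E) :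
    dFP f g ≤ ⨆ u, edist (f u) (g u) :=
  iInf_le_of_le ⟨Homeomorph.refl I, rfl⟩ le_rfl

theorem dFP_self {E : Type*} [PseudoEMetricSpace E] (f : I → E) : dFP f f = 0 :=
  nonpos_iff_eq_zero.1 <| (dFP_le_iSup_edist f f).trans_eq <| by simp

theorem exists_dFP_lt_of_continuous_uncurry {E : Type*} [PseudoMetricSpace E] {F : I → I → E}
    (hF : Continuous (Function.uncurry F)) (t : I) {ε : ℝ} (hε : 0 < ε) :
    ∃ δ : ℝ, 0 < δ ∧ ∀ s : I, |(s : ℝ) - t| < δ → dFP (F s) (F t) < ENNReal.ofReal ε := by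
  let Φ : C(I, C(I, E)) := ContinuousMap.curry ⟨_, hF⟩
  obtain ⟨δ, hδ, hΦ⟩ := Metric.continuous_iff.1 Φ.continuous t ε hε
  refine ⟨δ, hδ, fun s hs => (dFP_le_iSup_edist _ _).trans_lt ?_⟩
  refine (iSup_le fun u => ?_).trans_lt
    ((ENNReal.ofReal_lt_ofReal_iff hε).2 (hΦ s (by rwa [Subtype.dist_eq, Real.dist_eq])))
  rw [edist_dist]
  exact ENNReal.ofReal_le_ofReal (ContinuousMap.dist_apply_le_dist (f := Φ s) (g := Φ t) u)

theorem dist_convexComb_le {E : Type*} [NormedAddCommGroup E] [NormedSpace ℝ E] (t : I)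
    (a a' b b' : E) :
    dist ((1 - (t : ℝ)) • a + (t : ℝ) • b) ((1 - (t : ℝ)) • a' + (t : ℝ) • b') ≤
      dist a a' + dist b b' := by
  have ht₀ : (0 : ℝ) ≤ t := t.2.1
  have ht₁ : (t : ℝ) ≤ 1 := t.2.2
  calc _ ≤ dist ((1 - (t : ℝ)) • a) ((1 - (t : ℝ)) • a') + dist ((t : ℝ) • b) ((t : ℝ) • b') :=
        dist_add_add_le _ _ _ _
    _ = (1 - t) * dist a a' + t * dist b b' := by
        rw [dist_smul₀, dist_smul₀, Real.norm_of_nonneg (by linarith), Real.norm_of_nonneg ht₀]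
    _ ≤ dist a a' + dist b b' := by
        nlinarith [dist_nonneg (x := a) (y := a'), dist_nonneg (x := b) (y := b')]

theorem locallyInjective_add_circleMap {X E : Type*} [TopologicalSpace X] [LinearOrder X]
    [NormedAddCommGroup E] [NormedSpace ℝ E] (ι : ℂ →ₗᵢ[ℝ] E) {A : X → E} {M : X → ℝ}
    (hM : Continuous M) (hA : ∀ s s', s < s' → dist (A s) (A s') < M s' - M s) {e : ℝ}
    (he : 0 < e) : LocallyInjective fun s => A s + ι (circleMap 0 (π * e) (M s / e)) := by
  intro x
  set P := fun s => ι (circleMap 0 (π * e) (M s / e))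
  set U := M ⁻¹' Metric.ball (M x) (π * e / 2)
  have hne : ∀ s ∈ U, ∀ s' ∈ U, s < s' → A s + P s ≠ A s' + P s' := by
    intro s hs s' hs' hss' heq
    rw [mem_preimage, Metric.mem_ball, Real.dist_eq] at hs hs'
    have hangle : |M s' / e - M s / e| ≤ π := by
      rw [← sub_div, abs_div, abs_of_pos he, div_le_iff₀ he]
      linarith [abs_sub_le (M s') (M x) (M s), abs_sub_comm (M x) (M s)]
    have hP : dist (P s') (P s) = dist (A s) (A s') := by
      rw [← dist_add_left (A s) (P s') (P s), heq, dist_add_right]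
    have hwind : 2 * |M s' - M s| ≤ dist (P s') (P s) := by
      refine le_of_eq_of_le ?_ ((mul_abs_le_dist_circleMap 0 (π * e) hangle).trans_eq
        (ι.isometry.dist_eq _ _).symm)
      rw [abs_mul, abs_of_pos pi_pos, abs_of_pos he, ← sub_div, abs_div, abs_of_pos he]
      field_simp
    have hgap := hA s s' hss'
    rw [hP] at hwind
    linarith [le_abs_self (M s' - M s), dist_nonneg (x := A s) (y := A s')]
  refine ⟨U, hM.continuousAt.preimage_mem_nhds (Metric.ball_mem_nhds _ (by positivity)),
    fun s hs s' hs' heq => ?_⟩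
  by_contra hss'
  rcases lt_or_gt_of_ne hss' with h | h
  · exact hne s hs s' hs' h heq
  · exact hne s' hs' s hs h heq.symm

section Clock

variable {E : Type*} [PseudoMetricSpace E] {α β : I → E}

noncomputable def clock (α β : I → E) (s : I) : ℝ :=
  variationOnFromTo α univ 0 s + variationOnFromTo β univ 0 s + s

theorem continuous_clock (hα : BoundedVariationOn α univ) (hαc : Continuous α)
    (hβ : BoundedVariationOn β univ) (hβc : Continuous β) : Continuous (clock α β) :=
  ((hα.continuous_variationOnFromTo hαc 0).add (hβ.continuous_variationOnFromTo hβc 0)).add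
    continuous_subtype_val

theorem dist_add_dist_add_sub_le_clock_sub (hα : BoundedVariationOn α univ)
    (hβ : BoundedVariationOn β univ) {x y : I} (hxy : x ≤ y) :
    dist (α x) (α y) + dist (β x) (β y) + (y - x) ≤ clock α β y - clock α β x := by
  have := hα.dist_le_variationOnFromTo_sub 0 hxy
  have := hβ.dist_le_variationOnFromTo_sub 0 hxy
  simp only [clock]
  linarith

theorem monotone_clock (hα : BoundedVariationOn α univ) (hβ : BoundedVariationOn β univ) :
    Monotone (clock α β) := fun x y hxy => by
  have := dist_add_dist_add_sub_le_clock_sub hα hβ hxy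
  have : (x : ℝ) ≤ y := hxy
  linarith [dist_nonneg (x := α x) (y := α y), dist_nonneg (x := β x) (y := β y)]

end Clock

section SpiralHomotopy

variable {E : Type*} [NormedAddCommGroup E] [NormedSpace ℝ E] (ι : ℂ →ₗᵢ[ℝ] E) {α β : I → E}

noncomputable def spiralHomotopy (α β : I → E) (t s : I) : E :=
  (1 - (t : ℝ)) • α s + (t : ℝ) • β s +
    ι (circleMap 0 (π * (t * (1 - t))) (clock α β s / (t * (1 - t))))

@[simp]
theorem spiralHomotopy_zero : spiralHomotopy ι α β 0 = α := by
  funext s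
  simp [spiralHomotopy]

@[simp]
theorem spiralHomotopy_one : spiralHomotopy ι α β 1 = β := by
  funext s
  simp [spiralHomotopy]

theorem continuous_uncurry_spiralHomotopy (hα : BoundedVariationOn α univ)
    (hβ : BoundedVariationOn β univ) (hαc : Continuous α) (hβc : Continuous β) :
    Continuous (Function.uncurry (spiralHomotopy ι α β)) := by
  have hM := continuous_clock hα hαc hβ hβc
  refine .add (by fun_prop) (ι.continuous.comp
    (continuous_circleMap_zero_of_continuousAt (by fun_prop) fun p hp => ?_))
  exact (hM.comp continuous_snd).continuousAt.div (by fun_prop) (right_ne_zero_of_mul hp)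

theorem rectifiable_spiralHomotopy (hα : BoundedVariationOn α univ)
    (hβ : BoundedVariationOn β univ) (t : I) : Rectifiable (spiralHomotopy ι α β t) := by
  have hg : Monotone fun s => (1 + π) * clock α β s :=
    fun x y hxy => mul_le_mul_of_nonneg_left (monotone_clock hα hβ hxy) (by positivity)
  have hgbv : BoundedVariationOn (fun s => (1 + π) * clock α β s) univ :=
    (hg.monotoneOn univ).boundedVariationOn fun x _ =>
      abs_le_max_abs_abs (hg nonneg') (hg le_one')
  refine ne_top_of_le_ne_top hgbv (eVariationOn_le_of_edist_le fun x _ y _ hxy => ?_)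
  rw [edist_dist, edist_dist]
  refine ENNReal.ofReal_le_ofReal ?_
  have hclock := dist_add_dist_add_sub_le_clock_sub hα hβ hxy
  have hxy' : (x : ℝ) ≤ y := hxy
  rw [Real.dist_eq, abs_sub_comm, abs_of_nonneg (sub_nonneg.2 (hg hxy))]
  calc _ ≤ dist (α x) (α y) + dist (β x) (β y) + π * |clock α β x - clock α β y| :=
        (dist_add_add_le _ _ _ _).trans (add_le_add (dist_convexComb_le t _ _ _ _)
          ((ι.isometry.dist_eq _ _).trans_le (by
            simpa [abs_of_pos pi_pos] using dist_circleMap_div_le π (t * (1 - t)) _ _)))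
    _ ≤ _ := by
        rw [abs_sub_comm, abs_of_nonneg (sub_nonneg.2 (monotone_clock hα hβ hxy))]
        dsimp only
        linarith

theorem locallyInjective_spiralHomotopy (hα : BoundedVariationOn α univ)
    (hβ : BoundedVariationOn β univ) (hαc : Continuous α) (hβc : Continuous β)
    (hαi : LocallyInjective α) (hβi : LocallyInjective β) (t : I) :
    LocallyInjective (spiralHomotopy ι α β t) := by
  rcases eq_or_ne t 0 with rfl | ht₀
  · simpa using hαi
  rcases eq_or_ne t 1 with rfl | ht₁
  · simpa using hβi
  have he : 0 < (t : ℝ) * (1 - t) :=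
    mul_pos (unitInterval.pos_iff_ne_zero.2 ht₀)
      (sub_pos.2 (unitInterval.lt_one_iff_ne_one.2 ht₁))
  refine locallyInjective_add_circleMap ι (continuous_clock hα hαc hβ hβc)
    (fun x y hxy => ?_) he
  have hclock := dist_add_dist_add_sub_le_clock_sub hα hβ hxy.le
  have hxy' : (x : ℝ) < y := hxy
  linarith [dist_convexComb_le t (α x) (α y) (β x) (β y)]

end SpiralHomotopy

/-- For n ≥ 2, the space of immersed rectifiable paths in ℝⁿ is path-connected
under the path Fréchet distance. -/
theorem immersed_paths_path_connected (n : ℕ) (hn : 2 ≤ n)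
    (α β : unitInterval → EuclideanSpace ℝ (Fin n))
    (hαc : Continuous α) (hαr : Rectifiable α) (hαi : LocallyInjective α)
    (hβc : Continuous β) (hβr : Rectifiable β) (hβi : LocallyInjective β) :
    ∃ Γ : unitInterval → unitInterval → EuclideanSpace ℝ (Fin n),
      (∀ t, Continuous (Γ t) ∧ Rectifiable (Γ t) ∧ LocallyInjective (Γ t)) ∧
      dFP (Γ 0) α = 0 ∧ dFP (Γ 1) β = 0 ∧
      (∀ t : unitInterval, ∀ ε : ℝ, 0 < ε → ∃ δ : ℝ, 0 < δ ∧
        ∀ s : unitInterval, |(s : ℝ) - (t : ℝ)| < δ →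
          dFP (Γ s) (Γ t) < ENNReal.ofReal ε) := by
  have hΓ := continuous_uncurry_spiralHomotopy (planeEmbedding hn) hαr hβr hαc hβc
  refine ⟨spiralHomotopy (planeEmbedding hn) α β, fun t => ⟨hΓ.uncurry_left t,
    rectifiable_spiralHomotopy _ hαr hβr t,
    locallyInjective_spiralHomotopy _ hαr hβr hαc hβc hαi hβi t⟩, ?_, ?_,
    fun t ε hε => exists_dFP_lt_of_continuous_uncurry hΓ t hε⟩
  · rw [spiralHomotopy_zero]
    exact dFP_self α
  · rw [spiralHomotopy_one]
    exact dFP_self β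
end

section
/- For n = 1, the space of embedded paths in ℝ under the path Fréchet distance is not path-connected: for α, β : [0,1] → ℝ given by α(t) = t and β(t) = 1 − t (both continuous, rectifiable, and injective), there is no family Γ : [0,1] → ([0,1] → ℝ) such that each Γ_t is continuous and injective, d_FP(Γ_0, α) = 0, d_FP(Γ_1, β) = 0, and t ↦ Γ_t is continuous with respect to d_FP. -/
open unitInterval

/-! An orientation-preserving homeomorphism of `[0,1]` fixes both endpoints, so `dFP` dominates
the distance between initial points and between final points. Along a `dFP`-continuous family
`Γ` the gap `Γ_t 1 - Γ_t 0` is therefore continuous in `t`; it equals `1` for `α` and `-1`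
for `β`, so it vanishes at some `t`, and `Γ_t` is not injective. -/

theorem unitInterval.homeomorph_map_one_of_map_zero (r : I ≃ₜ I) (h0 : r 0 = 0) : r 1 = 1 := by
  obtain ⟨s, hs⟩ := r.surjective 1
  rcases r.continuous.strictMono_of_inj r.injective with hmono | hanti
  · rcases (le_one' : s ≤ 1).lt_or_eq with hlt | rfl
    · have h1lt : r s < r 1 := hmono hlt
      rw [hs] at h1lt
      exact absurd h1lt le_one'.not_gt
    · exact hs
  · exact absurd (h0 ▸ hanti (zero_lt_one' I)) (nonneg' (t := r 1)).not_gt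

section

variable {E : Type*} [PseudoEMetricSpace E] {α β : I → E}

theorem edist_apply_zero_le_dFP : edist (α 0) (β 0) ≤ dFP α β :=
  le_iInf fun r => le_iSup_of_le 0 (by rw [r.2])

theorem edist_apply_one_le_dFP : edist (α 1) (β 1) ≤ dFP α β :=
  le_iInf fun r => le_iSup_of_le 1 (by rw [homeomorph_map_one_of_map_zero r.1 r.2])

end

section

variable {E : Type*} [EMetricSpace E] {α β : I → E}

theorem apply_zero_eq_of_dFP_eq_zero (h : dFP α β = 0) : α 0 = β 0 :=
  edist_le_zero.1 (h ▸ edist_apply_zero_le_dFP)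

theorem apply_one_eq_of_dFP_eq_zero (h : dFP α β = 0) : α 1 = β 1 :=
  edist_le_zero.1 (h ▸ edist_apply_one_le_dFP)

end

theorem continuous_of_edist_le {X E : Type*} [PseudoMetricSpace X] [PseudoMetricSpace E]
    {g : X → E} {d : X → X → ENNReal} (hg : ∀ s t, edist (g s) (g t) ≤ d s t)
    (hd : ∀ t, ∀ ε : ℝ, 0 < ε → ∃ δ : ℝ, 0 < δ ∧ ∀ s, dist s t < δ → d s t < ENNReal.ofReal ε) :
    Continuous g := by
  refine Metric.continuous_iff.2 fun t ε hε => ?_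
  obtain ⟨δ, hδ, hδd⟩ := hd t ε hε
  exact ⟨δ, hδ, fun s hs => edist_lt_ofReal.1 ((hg s t).trans_lt (hδd s hs))⟩

/-- For n = 1, the space of embedded paths in ℝ under the path Fréchet
distance is not path-connected: there is no continuous family of injective
paths from α(t) = t to β(t) = 1 - t. -/
theorem embedded_paths_not_path_connected_dim_one :
    ¬ ∃ Γ : unitInterval → unitInterval → ℝ,
      (∀ t, Continuous (Γ t) ∧ Function.Injective (Γ t)) ∧
      dFP (Γ 0) (fun t : unitInterval => (t : ℝ)) = 0 ∧
      dFP (Γ 1) (fun t : unitInterval => 1 - (t : ℝ)) = 0 ∧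
      (∀ t : unitInterval, ∀ ε : ℝ, 0 < ε → ∃ δ : ℝ, 0 < δ ∧
        ∀ s : unitInterval, |(s : ℝ) - (t : ℝ)| < δ →
          dFP (Γ s) (Γ t) < ENNReal.ofReal ε) := by
  rintro ⟨Γ, hΓ, h0, h1, hcont⟩
  have hcont' : ∀ t, ∀ ε : ℝ, 0 < ε → ∃ δ : ℝ, 0 < δ ∧
      ∀ s, dist s t < δ → dFP (Γ s) (Γ t) < ENNReal.ofReal ε := by
    simpa only [Subtype.dist_eq, Real.dist_eq] using hcont
  have hstart : Continuous fun t => Γ t 0 :=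
    continuous_of_edist_le (fun _ _ => edist_apply_zero_le_dFP) hcont'
  have hend : Continuous fun t => Γ t 1 :=
    continuous_of_edist_le (fun _ _ => edist_apply_one_le_dFP) hcont'
  have hgap : (0 : ℝ) ∈ Set.Icc (Γ 1 1 - Γ 1 0) (Γ 0 1 - Γ 0 0) := by
    simp [apply_zero_eq_of_dFP_eq_zero h0, apply_one_eq_of_dFP_eq_zero h0,
      apply_zero_eq_of_dFP_eq_zero h1, apply_one_eq_of_dFP_eq_zero h1]
  obtain ⟨s, hs⟩ := intermediate_value_univ 1 0 (hend.sub hstart) hgap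
  exact one_ne_zero ((hΓ s).2 (sub_eq_zero.1 hs))
end
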